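/- arXiv:2011.11150 — 3 statements merged into one kernel-verified Lean document; each statement's English description precedes it below -/
import Mathlib

section
/- Let d ≥ 1 and B ∈ ℝ^{d×d}. If Tr(exp(B∘B)) = d, then for all indices i, j one has (exp(B∘B))_{ij} · B_{ji} = 0. -/
open Matrix Nat

/-!
Write `A = B ⊙ B`, a matrix with nonnegative entries. The series
`Tr (exp A) = ∑ₙ Tr (Aⁿ) / n!` has nonnegative terms and its zeroth term is already `d`, so
`Tr (Aⁿ⁺¹) = 0` for every `n`. Since `(Aⁿ)ᵢⱼ Aⱼᵢ` is one of the nonnegative summands of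
`(Aⁿ⁺¹)ᵢᵢ`, it vanishes, hence so does `(exp A)ᵢⱼ Aⱼᵢ = ∑ₙ (Aⁿ)ᵢⱼ Aⱼᵢ / n!`.
Finally `Aⱼᵢ = Bⱼᵢ²`.
-/

namespace Matrix

variable {ι : Type*} [Fintype ι] [DecidableEq ι]

theorem hasSum_exp_apply {𝕂 : Type*} [RCLike 𝕂] (A : Matrix ι ι 𝕂) (i j : ι) :
    HasSum (fun n => (n !⁻¹ : 𝕂) * (A ^ n) i j) (NormedSpace.exp A i j) := by
  open scoped Norms.Operator in
  exact Pi.hasSum.mp (Pi.hasSum.mp (NormedSpace.exp_series_hasSum_exp' (𝕂 := 𝕂) A) i) j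

theorem hasSum_trace_exp {𝕂 : Type*} [RCLike 𝕂] (A : Matrix ι ι 𝕂) :
    HasSum (fun n => (n !⁻¹ : 𝕂) * trace (A ^ n)) (trace (NormedSpace.exp A)) := by
  simpa only [trace, diag_apply, Finset.mul_sum] using
    hasSum_sum fun i _ => hasSum_exp_apply A i i

variable {A : Matrix ι ι ℝ}

theorem trace_pow_succ_eq_zero_of_trace_exp_eq_card (hA : ∀ i j, 0 ≤ A i j)
    (h : trace (NormedSpace.exp A) = Fintype.card ι) (n : ℕ) : trace (A ^ (n + 1)) = 0 := by
  have hterm_nonneg (n : ℕ) : 0 ≤ (n !⁻¹ : ℝ) * trace (A ^ n) :=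
    mul_nonneg (by positivity) (Finset.sum_nonneg fun i _ => pow_apply_nonneg hA n i i)
  have htail : HasSum (fun n => ((n + 1) !⁻¹ : ℝ) * trace (A ^ (n + 1))) 0 := by
    simpa [h] using (hasSum_nat_add_iff' 1).mpr (hasSum_trace_exp A)
  have hterm := congrFun ((hasSum_zero_iff_of_nonneg fun n => hterm_nonneg (n + 1)).mp htail) n
  simpa [factorial_ne_zero] using hterm

theorem pow_apply_mul_apply_eq_zero_of_trace_pow_succ_eq_zero (hA : ∀ i j, 0 ≤ A i j) {n : ℕ}
    (h : trace (A ^ (n + 1)) = 0) (i j : ι) : (A ^ n) i j * A j i = 0 := by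
  have hdiag : (A ^ (n + 1)) i i = 0 :=
    (Finset.sum_eq_zero_iff_of_nonneg fun k _ => pow_apply_nonneg hA (n + 1) k k).mp h i
      (Finset.mem_univ i)
  rw [pow_succ, mul_apply] at hdiag
  exact (Finset.sum_eq_zero_iff_of_nonneg fun k _ =>
    mul_nonneg (pow_apply_nonneg hA n i k) (hA k i)).mp hdiag j (Finset.mem_univ j)

theorem exp_apply_mul_apply_eq_zero_of_trace_exp_eq_card (hA : ∀ i j, 0 ≤ A i j)
    (h : trace (NormedSpace.exp A) = Fintype.card ι) (i j : ι) :
    NormedSpace.exp A i j * A j i = 0 := by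
  have hterm (n : ℕ) : (n !⁻¹ : ℝ) * (A ^ n) i j * A j i = 0 := by
    rw [mul_assoc, pow_apply_mul_apply_eq_zero_of_trace_pow_succ_eq_zero hA
      (trace_pow_succ_eq_zero_of_trace_exp_eq_card hA h n), mul_zero]
  exact ((hasSum_exp_apply A i j).mul_right (A j i)).unique
    (by simpa only [hterm] using hasSum_zero)

end Matrix

theorem notears_constraint_zero_imp_grad_zero_general
    (d : ℕ) (B : Matrix (Fin d) (Fin d) ℝ)
    (h : Matrix.trace (NormedSpace.exp (B ⊙ B)) = (d : ℝ)) :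
    ∀ i j : Fin d, (NormedSpace.exp (B ⊙ B)) i j * B j i = 0 := by
  intro i j
  have hsq : NormedSpace.exp (B ⊙ B) i j * (B j i * B j i) = 0 :=
    exp_apply_mul_apply_eq_zero_of_trace_exp_eq_card (fun p q => mul_self_nonneg (B p q))
      (by rwa [Fintype.card_fin]) i j
  rcases mul_eq_zero.mp hsq with hexp | hB
  · rw [hexp, zero_mul]
  · rw [mul_self_eq_zero.mp hB, mul_zero]

theorem notears_constraint_zero_imp_grad_zero
    (d : ℕ) (hd : 1 ≤ d) (B : Matrix (Fin d) (Fin d) ℝ)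
    (h : Matrix.trace (NormedSpace.exp (B ⊙ B)) = (d : ℝ)) :
    ∀ i j : Fin d, (NormedSpace.exp (B ⊙ B)) i j * B j i = 0 :=
  notears_constraint_zero_imp_grad_zero_general d B h
end

section
/- (Failure of regularity / LICQ for the polynomial constraint.) Let d ≥ 1, c > 0 and B ∈ ℝ^{d×d}. If Tr((I + c·B∘B)^d) = d (i.e., B is a feasible point of the acyclicity constraint), then the Fréchet derivative of the map B ↦ Tr((I + c·B∘B)^d) − d at B is the zero linear functional; in particular, no feasible point of the constraint Tr((I + c·B∘B)^d) − d = 0 is a regular point (the linear independence constraint qualification fails at every feasible point). -/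
/-!
The constraint function `f(A) = Tr((I + c·A∘A)^d) − d` is nonnegative everywhere: for `c ≥ 0`
the matrix `c·A∘A` is entrywise nonnegative, and then every diagonal entry of `(I + c·A∘A)^d`
is at least `1`. So a feasible point, where `f` vanishes, is a global minimum of `f`, and
Fermat's rule forces the derivative there to be zero.
-/

open Matrix

attribute [local instance] Matrix.frobeniusNormedAddCommGroup Matrix.frobeniusNormedSpace

namespace Matrix

variable {n α : Type*} [DecidableEq n] [Semiring α] [PartialOrder α]
  [IsOrderedRing α] {A : Matrix n n α}

lemma one_add_apply_nonneg (hA : ∀ i j, 0 ≤ A i j) (i j : n) : 0 ≤ (1 + A) i j := by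
  rw [add_apply, one_apply]
  split_ifs
  · exact add_nonneg zero_le_one (hA i j)
  · exact add_nonneg le_rfl (hA i j)

lemma one_le_one_add_pow_apply_self [Fintype n] (hA : ∀ i j, 0 ≤ A i j) (k : ℕ) (i : n) :
    1 ≤ ((1 + A) ^ k) i i := by
  induction k with
  | zero => simp
  | succ k ih =>
    have hprod : 0 ≤ ((1 + A) ^ k * A) i i := by
      rw [mul_apply]
      exact Finset.sum_nonneg fun l _ =>
        mul_nonneg (pow_apply_nonneg (one_add_apply_nonneg hA) k i l) (hA l i)
    rw [pow_succ, mul_add, mul_one, add_apply]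
    exact le_add_of_le_of_nonneg ih hprod

lemma card_le_trace_one_add_pow [Fintype n] (hA : ∀ i j, 0 ≤ A i j) (k : ℕ) :
    (Fintype.card n : α) ≤ trace ((1 + A) ^ k) := by
  rw [Fintype.card_eq_sum_ones, Nat.cast_sum, Nat.cast_one]
  exact Finset.sum_le_sum fun i _ => one_le_one_add_pow_apply_self hA k i

lemma smul_hadamard_self_apply_nonneg {m n : Type*} {c : ℝ} (hc : 0 ≤ c)
    (A : Matrix m n ℝ) (i : m) (j : n) : 0 ≤ (c • (A ⊙ A)) i j := by
  rw [smul_apply, hadamard_apply, smul_eq_mul]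
  exact mul_nonneg hc (mul_self_nonneg _)

end Matrix

theorem poly_constraint_licq_fails_general
    (d : ℕ) (c : ℝ) (hc : 0 < c) (B : Matrix (Fin d) (Fin d) ℝ)
    (hfeas : Matrix.trace ((1 + c • (B ⊙ B)) ^ d) = (d : ℝ)) :
    fderiv ℝ (fun A : Matrix (Fin d) (Fin d) ℝ =>
      Matrix.trace ((1 + c • (A ⊙ A)) ^ d) - (d : ℝ)) B = 0 := by
  have hmin : IsLocalMin (fun A : Matrix (Fin d) (Fin d) ℝ =>
      Matrix.trace ((1 + c • (A ⊙ A)) ^ d) - (d : ℝ)) B :=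
    Filter.Eventually.of_forall fun A => by
      have h := card_le_trace_one_add_pow (smul_hadamard_self_apply_nonneg hc.le A) d
      rw [Fintype.card_fin] at h
      simp only [hfeas, sub_self, sub_nonneg]
      exact h
  exact hmin.fderiv_eq_zero

/-- Failure of regularity / LICQ for the polynomial constraint: at every feasible point `B` of
the constraint `Tr((I + c·B∘B)^d) − d = 0`, the Fréchet derivative of the constraint function is
the zero linear functional, so no feasible point is regular. -/
theorem poly_constraint_licq_fails
    (d : ℕ) (hd : 1 ≤ d) (c : ℝ) (hc : 0 < c) (B : Matrix (Fin d) (Fin d) ℝ)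
    (hfeas : Matrix.trace ((1 + c • (B ⊙ B)) ^ d) = (d : ℝ)) :
    fderiv ℝ (fun A : Matrix (Fin d) (Fin d) ℝ =>
      Matrix.trace ((1 + c • (A ⊙ A)) ^ d) - (d : ℝ)) B = 0 :=
  poly_constraint_licq_fails_general d c hc B hfeas
end

section
/- (Acyclicity characterization underlying the polynomial constraint.) Let d ≥ 1, c > 0 and B ∈ ℝ^{d×d}. Then Tr((I + c·B∘B)^d) = d if and only if the matrix B∘B is nilpotent, i.e., (B∘B)^d = 0; equivalently, B represents a directed acyclic graph (the directed graph with an edge j → i whenever B_{ji} ≠ 0 has no directed cycles). -/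
/-!
Put `M = c • (B ⊙ B)`: it is entrywise nonnegative and `0 < M j i ↔ B j i ≠ 0`, so `(M ^ k) i j > 0`
exactly when the graph has a walk of length `k` from `i` to `j`. A cycle therefore makes a diagonal
entry of some power `M ^ k` positive, whereas the trace of every positive power of a nilpotent
matrix vanishes; conversely, a walk of length `d` visits `d + 1` vertices, so it contains a cycle
of length at most `d`. Finally `Tr((I + M) ^ d) = d + ∑_{k=1}^d (d choose k) Tr(M ^ k)` with
nonnegative terms, so the trace condition says that there is no closed walk of length `1 … d`.
-/

namespace Quiver.Path

variable {V : Type*} [Quiver V]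

theorem exists_cycle_of_not_nodup_vertices {a b : V} (p : Path a b) (hp : ¬ p.vertices.Nodup) :
    ∃ (v : V) (q : Path v v), 0 < q.length ∧ q.length ≤ p.length := by
  induction p with
  | nil => simp at hp
  | @cons b c p e ih =>
    by_cases hc : c ∈ p.vertices
    · obtain ⟨_, q, rfl⟩ := p.exists_eq_comp_of_mem_vertices hc
      exact ⟨c, q.cons e, by simp, by simp⟩
    · have hp' : ¬ p.vertices.Nodup := by simpa [List.nodup_append, hc] using hp
      obtain ⟨v, q, hq, hqp⟩ := ih hp'
      exact ⟨v, q, hq, hqp.trans p.length.le_succ⟩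

theorem not_nodup_vertices_of_card_le_length [Fintype V] {a b : V} (p : Path a b)
    (hp : Fintype.card V ≤ p.length) : ¬ p.vertices.Nodup := fun h => by
  have := h.length_le_card
  rw [vertices_length] at this
  omega

theorem transGen_iff_exists_length_pos {a b : V} :
    Relation.TransGen (fun i j : V => Nonempty (i ⟶ j)) a b ↔ ∃ p : Path a b, 0 < p.length := by
  constructor
  · intro h
    induction h with
    | single e => exact ⟨e.some.toPath, by simp⟩
    | tail _ e ih => exact ⟨ih.choose.cons e.some, by simp⟩
  · rintro ⟨p, hp⟩
    have reflTransGen {c : V} (q : Path a c) :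
        Relation.ReflTransGen (fun i j : V => Nonempty (i ⟶ j)) a c := by
      induction q with
      | nil => exact .refl
      | cons _ e ih => exact ih.tail ⟨e⟩
    cases p with
    | nil => simp at hp
    | cons p e => exact .tail' (reflTransGen p) ⟨e⟩

end Quiver.Path

namespace Matrix

variable {n R : Type*} [Fintype n] [DecidableEq n]

theorem trace_one_add_pow [CommRing R] (A : Matrix n n R) (m : ℕ) :
    trace ((1 + A) ^ m) = ∑ k ∈ Finset.range (m + 1), (m.choose k : R) * trace (A ^ k) := by
  rw [add_comm, (Commute.one_right A).add_pow, trace_sum]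
  refine Finset.sum_congr rfl fun k _ => ?_
  rw [one_pow, mul_one, ← nsmul_eq_mul', trace_smul, nsmul_eq_mul]

variable [CommRing R] [LinearOrder R] [IsStrictOrderedRing R] {A : Matrix n n R}

theorem trace_pow_eq_zero_iff (hA : ∀ i j, 0 ≤ A i j) (k : ℕ) :
    trace (A ^ k) = 0 ↔ ∀ i, (A ^ k) i i = 0 := by
  simpa [trace] using
    Finset.sum_eq_zero_iff_of_nonneg (s := Finset.univ) fun i _ => pow_apply_nonneg hA k i i

theorem transGen_pos_iff_exists_pow_apply_pos (hA : ∀ i j, 0 ≤ A i j) {i j : n} :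
    Relation.TransGen (fun a b => 0 < A a b) i j ↔ ∃ k, 0 < k ∧ 0 < (A ^ k) i j := by
  let := toQuiver A
  have hedge : (fun a b => 0 < A a b) = fun a b => Nonempty (a ⟶ b) := by
    ext a b
    exact ⟨fun h => ⟨⟨h⟩⟩, fun ⟨e⟩ => e.down⟩
  simp only [hedge, Quiver.Path.transGen_iff_exists_length_pos, pow_apply_pos_iff_nonempty_path hA]
  exact ⟨fun ⟨p, hp⟩ => ⟨p.length, hp, ⟨p, rfl⟩⟩, fun ⟨_, hk, ⟨p, hp⟩⟩ => ⟨p, hp ▸ hk⟩⟩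

theorem pow_apply_self_eq_zero_of_isNilpotent (hA : ∀ i j, 0 ≤ A i j) (hnil : IsNilpotent A)
    {k : ℕ} (hk : 0 < k) (i : n) : (A ^ k) i i = 0 :=
  (trace_pow_eq_zero_iff hA k).1
    (isNilpotent_trace_of_isNilpotent (hnil.pow_of_pos hk.ne')).eq_zero i

theorem pow_card_eq_zero_of_forall_pow_apply_self_eq_zero (hA : ∀ i j, 0 ≤ A i j)
    (h : ∀ k, 0 < k → k ≤ Fintype.card n → ∀ i, (A ^ k) i i = 0) :
    A ^ Fintype.card n = 0 := by
  let := toQuiver A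
  ext i j
  by_contra hne
  obtain ⟨p, hp⟩ := (pow_apply_pos_iff_nonempty_path hA _ i j).1
    ((pow_apply_nonneg hA _ i j).lt_of_ne' hne)
  obtain ⟨v, q, hq, hqp⟩ :=
    p.exists_cycle_of_not_nodup_vertices (p.not_nodup_vertices_of_card_le_length hp.ge)
  have hcycle : 0 < (A ^ q.length) v v := (pow_apply_pos_iff_nonempty_path hA _ v v).2 ⟨q, rfl⟩
  exact hcycle.ne' (h q.length hq (hp ▸ hqp) v)

theorem pow_card_eq_zero_iff_forall_not_transGen (hA : ∀ i j, 0 ≤ A i j) :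
    A ^ Fintype.card n = 0 ↔ ∀ i, ¬ Relation.TransGen (fun a b => 0 < A a b) i i := by
  simp only [transGen_pos_iff_exists_pow_apply_pos hA, not_exists, not_and]
  refine ⟨fun hnil i k hk => ?_, fun hac => ?_⟩
  · exact (pow_apply_self_eq_zero_of_isNilpotent hA ⟨_, hnil⟩ hk i).not_gt
  · exact pow_card_eq_zero_of_forall_pow_apply_self_eq_zero hA fun k hk _ i =>
      ((pow_apply_nonneg hA k i i).lt_or_eq.resolve_left (hac i k hk)).symm

theorem trace_one_add_pow_eq_card_iff (hA : ∀ i j, 0 ≤ A i j) (m : ℕ) :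
    trace ((1 + A) ^ m) = (Fintype.card n : R) ↔ ∀ k, 0 < k → k ≤ m → ∀ i, (A ^ k) i i = 0 := by
  have hterm_nonneg (k : ℕ) : 0 ≤ ((m.choose (k + 1) : R) * trace (A ^ (k + 1))) :=
    mul_nonneg (Nat.cast_nonneg _) (Finset.sum_nonneg fun i _ => pow_apply_nonneg hA _ i i)
  rw [trace_one_add_pow, Finset.sum_range_succ', Nat.choose_zero_right, pow_zero, trace_one,
    Nat.cast_one, one_mul, add_eq_right, Finset.sum_eq_zero_iff_of_nonneg fun k _ => hterm_nonneg k]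
  have hterm {k : ℕ} (hk : k < m) :
      (m.choose (k + 1) : R) * trace (A ^ (k + 1)) = 0 ↔ ∀ i, (A ^ (k + 1)) i i = 0 := by
    rw [mul_eq_zero, or_iff_right (Nat.cast_ne_zero.2 (Nat.choose_pos hk).ne'),
      trace_pow_eq_zero_iff hA]
  refine ⟨fun h k hk hkm => ?_, fun h k hk => ?_⟩
  · obtain ⟨k, rfl⟩ := Nat.exists_eq_succ_of_ne_zero hk.ne'
    exact (hterm hkm).1 (h k (Finset.mem_range.2 hkm))
  · rw [Finset.mem_range] at hk
    exact (hterm hk).2 (h (k + 1) k.succ_pos hk)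

theorem trace_one_add_pow_card_eq_card_iff (hA : ∀ i j, 0 ≤ A i j) :
    trace ((1 + A) ^ Fintype.card n) = (Fintype.card n : R) ↔ A ^ Fintype.card n = 0 := by
  rw [trace_one_add_pow_eq_card_iff hA]
  exact ⟨pow_card_eq_zero_of_forall_pow_apply_self_eq_zero hA,
    fun hnil k hk _ => pow_apply_self_eq_zero_of_isNilpotent hA ⟨_, hnil⟩ hk⟩

end Matrix

open Matrix

theorem poly_constraint_iff_nilpotent_iff_acyclic_general
    (d : ℕ) (c : ℝ) (hc : 0 < c) (B : Matrix (Fin d) (Fin d) ℝ) :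
    (Matrix.trace ((1 + c • (B ⊙ B)) ^ d) = (d : ℝ) ↔ (B ⊙ B) ^ d = 0) ∧
    ((B ⊙ B) ^ d = 0 ↔
      ∀ i : Fin d, ¬ Relation.TransGen (fun j i : Fin d => B j i ≠ 0) i i) := by
  set M := c • (B ⊙ B)
  have hM : ∀ i j, 0 ≤ M i j := fun i j => mul_nonneg hc.le (mul_self_nonneg (B i j))
  have hnil : (B ⊙ B) ^ d = 0 ↔ M ^ d = 0 := by
    rw [smul_pow, smul_eq_zero, or_iff_right (pow_ne_zero d hc.ne')]
  have hedge : (fun j i : Fin d => B j i ≠ 0) = fun a b => 0 < M a b := by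
    ext a b
    simp [M, mul_pos_iff_of_pos_left hc, mul_self_pos]
  rw [hnil, hedge]
  have htrace := trace_one_add_pow_card_eq_card_iff hM
  have hacyclic := pow_card_eq_zero_iff_forall_not_transGen hM
  rw [Fintype.card_fin] at htrace hacyclic
  exact ⟨htrace, hacyclic⟩

/-- Acyclicity characterization underlying the polynomial constraint: `Tr((I + c·B∘B)^d) = d` iff
`B∘B` is nilpotent (`(B∘B)^d = 0`), iff the directed graph with an edge `j → i` whenever
`B j i ≠ 0` has no directed cycles (no vertex reaches itself by a nonempty directed path). -/
theorem poly_constraint_iff_nilpotent_iff_acyclic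
    (d : ℕ) (hd : 1 ≤ d) (c : ℝ) (hc : 0 < c) (B : Matrix (Fin d) (Fin d) ℝ) :
    (Matrix.trace ((1 + c • (B ⊙ B)) ^ d) = (d : ℝ) ↔ (B ⊙ B) ^ d = 0) ∧
    ((B ⊙ B) ^ d = 0 ↔
      ∀ i : Fin d, ¬ Relation.TransGen (fun j i : Fin d => B j i ≠ 0) i i) :=
  poly_constraint_iff_nilpotent_iff_acyclic_general d c hc B
end
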